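/- Let S be a monoid and let X be a class of S-acts closed under coproducts, direct summands and retracts. Let R_X be the class of S-maps with respect to which every act in X is projective, and let U_X be the class of unitary S-monomorphisms f : X → Y with Y∖im(f) ∈ X. Then every S-act has an X-precover if and only if (U_X, R_X) is a weak factorization system and for every S-act X there exists Y ∈ X with hom(Y, X) ≠ ∅. -/

import Mathlib

universe u

/-- A right `S`-act: a set with a right action of the monoid `S`. -/
structure SAct (S : Type u) [Monoid S] : Type (u + 1) where
  carrier : Type u
  act : carrier → S → carrier
  act_one : ∀ a, act a 1 = a
  act_mul : ∀ a s t, act (act a s) t = act a (s * t)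

/-- A map of right `S`-acts. -/
structure SMap {S : Type u} [Monoid S] (A B : SAct S) : Type u where
  toFun : A.carrier → B.carrier
  map_act : ∀ a s, toFun (A.act a s) = B.act (toFun a) s

namespace SMap

variable {S : Type u} [Monoid S]

/-- Composition of `S`-maps. -/
def comp {A B C : SAct S} (g : SMap B C) (f : SMap A B) : SMap A C :=
  ⟨fun a => g.toFun (f.toFun a), fun a s => by
    show g.toFun (f.toFun (A.act a s)) = C.act (g.toFun (f.toFun a)) s
    rw [f.map_act, g.map_act]⟩

/-- The identity `S`-map. -/
def id (A : SAct S) : SMap A A := ⟨fun a => a, fun _ _ => rfl⟩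

end SMap

variable {S : Type u} [Monoid S]

/-- `f` has the left lifting property with respect to `g` (equivalently, `g` has the
right lifting property with respect to `f`). -/
def Lifts {A B C D : SAct S} (f : SMap A B) (g : SMap C D) : Prop :=
  ∀ (u : SMap A C) (v : SMap B D), g.comp u = v.comp f →
    ∃ h : SMap B C, h.comp f = u ∧ g.comp h = v

/-- A class of `S`-maps. -/
def MapClass (S : Type u) [Monoid S] : Type (u + 1) :=
  ∀ {A B : SAct S}, SMap A B → Prop

/-- `C^□`: the class of maps with the right lifting property with respect to every map of `C`. -/
def rlpC (C : MapClass S) : MapClass S :=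
  fun {_ _} g => ∀ {A B : SAct S} (f : SMap A B), C f → Lifts f g

/-- `□C`: the class of maps with the left lifting property with respect to every map of `C`. -/
def llpC (C : MapClass S) : MapClass S :=
  fun {_ _} f => ∀ {C' D : SAct S} (g : SMap C' D), C g → Lifts f g

/-- `cof(C) = □(C^□)`. -/
def cofC (C : MapClass S) : MapClass S := llpC (rlpC C)

/-- `fib(C) = (□C)^□`. -/
def fibC (C : MapClass S) : MapClass S := rlpC (llpC C)

/-- `(L, R)` is a weak factorization system. -/
structure IsWFS (L R : MapClass S) : Prop where
  rlp_eq : ∀ {A B : SAct S} (g : SMap A B), R g ↔ rlpC L g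
  llp_eq : ∀ {A B : SAct S} (f : SMap A B), L f ↔ llpC R f
  factor : ∀ {A B : SAct S} (h : SMap A B),
    ∃ (C : SAct S) (f : SMap A C) (g : SMap C B), L f ∧ R g ∧ g.comp f = h

/-- `g : A → C` is a retract of `f : A → B`:  there are `α : C → B`, `β : B → C` with
`β ∘ α = 1`, `α ∘ g = f` and `β ∘ f = g`. -/
def RetractOfMap {A B C : SAct S} (g : SMap A C) (f : SMap A B) : Prop :=
  ∃ (α : SMap C B) (β : SMap B C),
    β.comp α = SMap.id C ∧ α.comp g = f ∧ β.comp f = g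

/-- The square with sides `f : A → B`, `u : A → X`, `fbar : X → P`, `v : B → P` is a pushout
square (i.e. `fbar` is the pushout of `f` along `u`). -/
structure IsPushoutSq {A B X P : SAct S}
    (f : SMap A B) (u : SMap A X) (fbar : SMap X P) (v : SMap B P) : Prop where
  comm : fbar.comp u = v.comp f
  ue : ∀ ⦃Q : SAct S⦄ (g' : SMap X Q) (v' : SMap B Q), g'.comp u = v'.comp f →
    ∃! k : SMap P Q, k.comp fbar = g' ∧ k.comp v = v'

/-- The square with sides `pr1 : P → D`, `pr2 : P → A`, `g : A → B`, `v : D → B` is a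
pullback square (i.e. `pr1` is the pullback of `g` along `v`). -/
structure IsPullbackSq {P A D B : SAct S}
    (pr1 : SMap P D) (pr2 : SMap P A) (g : SMap A B) (v : SMap D B) : Prop where
  comm : g.comp pr2 = v.comp pr1
  ue : ∀ ⦃Q : SAct S⦄ (q1 : SMap Q D) (q2 : SMap Q A), g.comp q2 = v.comp q1 →
    ∃! k : SMap Q P, pr1.comp k = q1 ∧ pr2.comp k = q2

/-- `f` is an isomorphism of `S`-acts. -/
def IsIsoMap {A B : SAct S} (f : SMap A B) : Prop :=
  ∃ g : SMap B A, g.comp f = SMap.id A ∧ f.comp g = SMap.id B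

/-- A directed system of `S`-acts indexed by the ordinals `< lam`. -/
structure OSeq (S : Type u) [Monoid S] (lam : Ordinal.{u}) where
  obj : ∀ a : Ordinal.{u}, a < lam → SAct S
  map : ∀ (a b : Ordinal.{u}) (hab : a ≤ b) (hb : b < lam),
    SMap (obj a (lt_of_le_of_lt hab hb)) (obj b hb)
  map_id : ∀ (a : Ordinal.{u}) (ha : a < lam), map a a le_rfl ha = SMap.id (obj a ha)
  map_comp : ∀ (a b c : Ordinal.{u}) (hab : a ≤ b) (hbc : b ≤ c) (hc : c < lam),
    (map b c hbc hc).comp (map a b hab (lt_of_le_of_lt hbc hc)) = map a c (le_trans hab hbc) hc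

/-- A cocone over a directed system of `S`-acts indexed by ordinals `< lam`. -/
structure OCocone {lam : Ordinal.{u}} (F : OSeq S lam) where
  pt : SAct S
  ι : ∀ (a : Ordinal.{u}) (ha : a < lam), SMap (F.obj a ha) pt
  fac : ∀ (a b : Ordinal.{u}) (hab : a ≤ b) (hb : b < lam),
    (ι b hb).comp (F.map a b hab hb) = ι a (lt_of_le_of_lt hab hb)

/-- A cocone is a (directed) colimit if it satisfies the universal property. -/
def IsColimitO {lam : Ordinal.{u}} {F : OSeq S lam} (c : OCocone F) : Prop :=
  ∀ d : OCocone F, ∃! k : SMap c.pt d.pt, ∀ (a : Ordinal.{u}) (ha : a < lam),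
    k.comp (c.ι a ha) = d.ι a ha

/-- Restriction of a directed system to the ordinals `< γ`. -/
def OSeq.restrict {lam : Ordinal.{u}} (F : OSeq S lam) (γ : Ordinal.{u}) (hγ : γ ≤ lam) :
    OSeq S γ where
  obj a ha := F.obj a (lt_of_lt_of_le ha hγ)
  map a b hab hb := F.map a b hab (lt_of_lt_of_le hb hγ)
  map_id a ha := F.map_id a _
  map_comp a b c hab hbc hc := F.map_comp a b c hab hbc _

/-- The cocone over the restriction to `γ` with vertex `F.obj γ`. -/
def OSeq.coconeAt {lam : Ordinal.{u}} (F : OSeq S lam) (γ : Ordinal.{u}) (hγ : γ < lam) :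
    OCocone (F.restrict γ hγ.le) where
  pt := F.obj γ hγ
  ι a ha := F.map a γ ha.le hγ
  fac a b hab hb := F.map_comp a b γ hab hb.le hγ

/-- A `λ`-sequence: a directed system of `S`-acts indexed by the ordinals `< λ`, together
with a directed colimit, which is continuous at every limit ordinal `γ ≤ λ`. -/
structure LambdaSequence (S : Type u) [Monoid S] (lam : Ordinal.{u}) where
  seq : OSeq S lam
  cocone : OCocone seq
  isColimit : IsColimitO cocone
  continuity : ∀ (γ : Ordinal.{u}) (hγ : γ < lam), Order.IsSuccLimit γ →
    IsColimitO (seq.coconeAt γ hγ)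

/-- An ordinal `lam` is `γ`-filtered: it is a limit ordinal and every subset of `lam` of
cardinality at most `γ` has supremum `< lam`. -/
def IsGammaFiltered (γ : Cardinal.{u}) (lam : Ordinal.{u}) : Prop :=
  Order.IsSuccLimit lam ∧ ∀ A : Set Ordinal.{u}, A ⊆ Set.Iio lam →
    Cardinal.mk A ≤ Cardinal.lift.{u + 1} γ → sSup A < lam

/-- A split monomorphism. -/
def SplitMonoM {A B : SAct S} (f : SMap A B) : Prop :=
  ∃ γ : SMap B A, γ.comp f = SMap.id A

/-- A split epimorphism. -/
def SplitEpiM {A B : SAct S} (f : SMap A B) : Prop :=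
  ∃ γ : SMap B A, f.comp γ = SMap.id B

/-- A unitary monomorphism of `S`-acts. -/
def IsUnitaryMono {X Y : SAct S} (f : SMap X Y) : Prop :=
  Function.Injective f.toFun ∧
    ∀ (y : Y.carrier) (s : S), Y.act y s ∈ Set.range f.toFun → y ∈ Set.range f.toFun

/-- The class of unitary monomorphisms. -/
def UnitaryClass (S : Type u) [Monoid S] : MapClass S := fun {_ _} f => IsUnitaryMono f

/-- The class of split epimorphisms. -/
def SplitEpiClass (S : Type u) [Monoid S] : MapClass S := fun {_ _} f => SplitEpiM f

/-- `P` is projective with respect to the map `f : A → B`. -/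
def ProjWrt (P : SAct S) {A B : SAct S} (f : SMap A B) : Prop :=
  ∀ g : SMap P B, ∃ h : SMap P A, f.comp h = g

/-- `Q` is a retract of the act `P`. -/
def ActRetract (Q P : SAct S) : Prop :=
  ∃ (α : SMap Q P) (β : SMap P Q), β.comp α = SMap.id Q

/-- The coproduct (disjoint union) of two `S`-acts. -/
def SAct.coprod (A B : SAct S) : SAct S where
  carrier := A.carrier ⊕ B.carrier
  act x s := Sum.elim (fun a => Sum.inl (A.act a s)) (fun b => Sum.inr (B.act b s)) x
  act_one x := by cases x <;> simp [SAct.act_one]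
  act_mul x s t := by cases x <;> simp [SAct.act_mul]

/-- The coproduct (disjoint union) of a family of `S`-acts. -/
def SAct.sigmaCoprod {ι : Type u} (F : ι → SAct S) : SAct S where
  carrier := Σ i, (F i).carrier
  act x s := ⟨x.1, (F x.1).act x.2 s⟩
  act_one x := by cases x with | mk i a => exact congrArg (Sigma.mk i) ((F i).act_one a)
  act_mul x s t := by cases x with | mk i a => exact congrArg (Sigma.mk i) ((F i).act_mul a s t)

/-- The coproduct of a family of `S`-maps. -/
def coprodMap {ι : Type u} {A B : ι → SAct S} (f : ∀ i, SMap (A i) (B i)) :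
    SMap (SAct.sigmaCoprod A) (SAct.sigmaCoprod B) where
  toFun x := ⟨x.1, (f x.1).toFun x.2⟩
  map_act x s := congrArg (Sigma.mk x.1) ((f x.1).map_act x.2 s)

/-- An isomorphism class predicate: `A` and `B` are isomorphic `S`-acts. -/
def ActIso (A B : SAct S) : Prop := ∃ f : SMap A B, Function.Bijective f.toFun

/-- `B` is a direct summand of `A`. -/
def IsDirectSummand (B A : SAct S) : Prop := ∃ C : SAct S, ActIso (SAct.coprod B C) A

/-- The subact of `Y` on a subset `T` closed under the action. -/
def SAct.sub (Y : SAct S) (T : Set Y.carrier) (hT : ∀ t ∈ T, ∀ s : S, Y.act t s ∈ T) :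
    SAct S where
  carrier := {y // y ∈ T}
  act t s := ⟨Y.act t.1 s, hT t.1 t.2 s⟩
  act_one t := Subtype.ext (Y.act_one t.1)
  act_mul t s r := Subtype.ext (Y.act_mul t.1 s r)

/-- A class of `S`-acts. -/
def ActClass (S : Type u) [Monoid S] : Type (u + 1) := SAct S → Prop

/-- The class `R_X` of maps with respect to which every act of `X` is projective. -/
def RXClass (𝒳 : ActClass S) : MapClass S :=
  fun {_ _} f => ∀ P : SAct S, 𝒳 P → ProjWrt P f

/-- The class `U_X` of unitary monomorphisms `f : X → Y` with `Y ∖ im f ∈ X`. -/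
def UXClass (𝒳 : ActClass S) : MapClass S :=
  fun {_ Y} f =>
    ∃ (_ : Function.Injective f.toFun)
      (hu : ∀ (y : Y.carrier) (s : S),
        Y.act y s ∈ Set.range f.toFun → y ∈ Set.range f.toFun),
      𝒳 (Y.sub (Set.range f.toFun)ᶜ (fun t ht s hmem => ht (hu t s hmem)))

/-- Every `S`-act has an `𝒳`-precover. -/
def HasPrecover (𝒳 : ActClass S) (A : SAct S) : Prop :=
  ∃ (P : SAct S) (g : SMap P A), 𝒳 P ∧
    ∀ ⦃P' : SAct S⦄ (g' : SMap P' A), 𝒳 P' → ∃ f : SMap P' P, g.comp f = g'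

/-- A projective `S`-act. -/
def ProjectiveAct (P : SAct S) : Prop :=
  ∀ ⦃A B : SAct S⦄ (f : SMap A B), Function.Surjective f.toFun → ProjWrt P f

/-- The class of all surjective `S`-maps (epimorphisms). -/
def EpiClass (S : Type u) [Monoid S] : MapClass S :=
  fun {_ _} f => Function.Surjective f.toFun

/-- The free `S`-act on `n` generators. -/
def freeAct (S : Type u) [Monoid S] (n : ℕ) : SAct S where
  carrier := Fin n × S
  act p s := (p.1, p.2 * s)
  act_one p := by simp
  act_mul p s t := by simp [mul_assoc]

/-- `r` is a congruence on the `S`-act `A`. -/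
def IsCong (A : SAct S) (r : A.carrier → A.carrier → Prop) : Prop :=
  Equivalence r ∧ ∀ (a b : A.carrier) (s : S), r a b → r (A.act a s) (A.act b s)

/-- A finitely presented `S`-act: a quotient of a finitely generated free act by a
finitely generated congruence. -/
def FinPresented (M : SAct S) : Prop :=
  ∃ (n : ℕ) (q : SMap (freeAct S n) M), Function.Surjective q.toFun ∧
    ∃ (m : ℕ) (p : Fin m → (freeAct S n).carrier × (freeAct S n).carrier),
      (∀ i, q.toFun (p i).1 = q.toFun (p i).2) ∧
      ∀ r : (freeAct S n).carrier → (freeAct S n).carrier → Prop, IsCong (freeAct S n) r →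
        (∀ i, r (p i).1 (p i).2) →
        ∀ x y, q.toFun x = q.toFun y → r x y

/-- A pure epimorphism of `S`-acts. -/
def IsPureEpi {X Y : SAct S} (ψ : SMap X Y) : Prop :=
  Function.Surjective ψ.toFun ∧
    ∀ (M : SAct S), FinPresented M → ∀ f : SMap M Y, ∃ g : SMap M X, ψ.comp g = f

/-- The class of retracts of coproducts of finitely presented acts. -/
def RIFPClass (S : Type u) [Monoid S] : ActClass S :=
  fun A => ∃ (ι : Type u) (F : ι → SAct S),
    (∀ i, FinPresented (F i)) ∧ ActRetract A (SAct.sigmaCoprod F)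

/-- The one-element `S`-act. -/
def oneAct (S : Type u) [Monoid S] : SAct S :=
  ⟨PUnit, fun _ _ => PUnit.unit, fun _ => rfl, fun _ _ _ => rfl⟩

/-- The unique map to the one-element act. -/
def bangMap (A : SAct S) : SMap A (oneAct S) := ⟨fun _ => PUnit.unit, fun _ _ => rfl⟩

/-- The monoid `S` as a right `S`-act. -/
def regAct (S : Type u) [Monoid S] : SAct S := ⟨S, fun a s => a * s, mul_one, mul_assoc⟩

/-- The set of fixed points of an `S`-act. -/
def FixSet (A : SAct S) : Set A.carrier := {a | ∀ s : S, A.act a s = a}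

/-- The Rees quotient of `Y` collapsing the subset `T` (closed under the action) to a point. -/
def reesQuot (Y : SAct S) (T : Set Y.carrier) (hT : ∀ t ∈ T, ∀ s : S, Y.act t s ∈ T) :
    SAct S where
  carrier := Quot (fun a b => a = b ∨ (a ∈ T ∧ b ∈ T))
  act q s := Quot.lift (fun y => Quot.mk _ (Y.act y s))
    (fun a b hab => by
      rcases hab with h | ⟨ha, hb⟩
      · rw [h]
      · exact Quot.sound (Or.inr ⟨hT a ha s, hT b hb s⟩)) q
  act_one q := by
    induction q using Quot.ind with
    | _ y => exact congrArg (Quot.mk _) (Y.act_one y)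
  act_mul q s t := by
    induction q using Quot.ind with
    | _ y => exact congrArg (Quot.mk _) (Y.act_mul y s t)

/-- The class of monomorphisms whose Rees quotient lies in `𝒳`. -/
def XMonoClass (𝒳 : ActClass S) : MapClass S :=
  fun {X Y} f =>
    Function.Injective f.toFun ∧
      𝒳 (reesQuot Y (Set.range f.toFun)
        (fun t ht s => by
          obtain ⟨x, rfl⟩ := ht
          exact ⟨X.act x s, f.map_act x s⟩))

/-- The type of all `S`-maps (arrows). -/
def ArrowCls (S : Type u) [Monoid S] : Type (u + 1) := Σ (A B : SAct S), SMap A B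

/-- The class of pushouts of maps in `𝒞`. -/
def pushoutsOf (𝒞 : MapClass S) : MapClass S :=
  fun {X P} fbar => ∃ (A B : SAct S) (f : SMap A B) (u : SMap A X) (v : SMap B P),
    𝒞 f ∧ IsPushoutSq f u fbar v

/-- `h` is a transfinite composition of maps in `𝒟`. -/
def IsTransfiniteCompOf (𝒟 : MapClass S) {A L : SAct S} (h : SMap A L) : Prop :=
  ∃ (lam : Ordinal.{u}), Ordinal.omega0 ≤ lam ∧
    ∃ (Φ : LambdaSequence S lam) (h0 : (0 : Ordinal.{u}) < lam),
      (∀ (b : Ordinal.{u}) (hb : b + 1 < lam),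
        𝒟 (Φ.seq.map b (b + 1) (le_self_add : b ≤ b + 1) hb)) ∧
      Φ.seq.obj 0 h0 = A ∧ Φ.cocone.pt = L ∧ HEq (Φ.cocone.ι 0 h0) h

/-- `ret(𝒞)`: retracts of transfinite compositions of pushouts of maps in `𝒞`. -/
def retClass (𝒞 : MapClass S) : MapClass S :=
  fun {A _} g => ∃ (B : SAct S) (f : SMap A B),
    IsTransfiniteCompOf (pushoutsOf 𝒞) f ∧ RetractOfMap g f

/-- The class of pure epimorphisms. -/
def PureEpiClass (S : Type u) [Monoid S] : MapClass S := fun {_ _} f => IsPureEpi f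

/-- The subact `{z}` of `S`, for a left zero `z`. -/
def zSub (z : S) (hz : ∀ s : S, z * s = z) : SAct S :=
  (regAct S).sub {z} (fun t ht s => by
    have ht' : t = z := ht
    show (regAct S).act t s = z
    rw [ht']; exact hz s)

/-- The inclusion `{z} → S`, for a left zero `z`. -/
def zIncl (z : S) (hz : ∀ s : S, z * s = z) : SMap (zSub z hz) (regAct S) :=
  ⟨fun t => t.1, fun _ _ => rfl⟩

/-- The subact `K_d = g⁻¹(d)` of `C`, for a fixed point `d` of `D`. -/
def kerAct {C D : SAct S} (g : SMap C D) (d : D.carrier) (hd : d ∈ FixSet D) : SAct S :=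
  C.sub {c | g.toFun c = d} (fun c hc s => by
    simp only [Set.mem_setOf_eq] at hc ⊢
    rw [g.map_act, hc]
    exact hd s)

/-- A centred `S`-act: an act with exactly one fixed point. -/
def CAct (S : Type u) [Monoid S] : Type (u + 1) :=
  {A : SAct S // ∃! a : A.carrier, ∀ s : S, A.act a s = a}

/-- A class of maps of centred `S`-acts. -/
abbrev MapClassC (S : Type u) [Monoid S] : Type (u + 1) :=
  ∀ (A B : CAct S), SMap A.1 B.1 → Prop

/-- `C^□` in the category of centred `S`-acts. -/
def rlpCC (𝒞 : MapClassC S) : MapClassC S :=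
  fun _ _ g => ∀ (X Y : CAct S) (f : SMap X.1 Y.1), 𝒞 X Y f → Lifts f g

/-- `□C` in the category of centred `S`-acts. -/
def llpCC (𝒞 : MapClassC S) : MapClassC S :=
  fun _ _ f => ∀ (X Y : CAct S) (g : SMap X.1 Y.1), 𝒞 X Y g → Lifts f g

/-- A weak factorization system in the category of centred `S`-acts. -/
structure IsWFSC (L R : MapClassC S) : Prop where
  rlp_eq : ∀ (A B : CAct S) (g : SMap A.1 B.1), R A B g ↔ rlpCC L A B g
  llp_eq : ∀ (A B : CAct S) (f : SMap A.1 B.1), L A B f ↔ llpCC R A B f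
  factor : ∀ (A B : CAct S) (h : SMap A.1 B.1),
    ∃ (C : CAct S) (f : SMap A.1 C.1) (g : SMap C.1 B.1), L A C f ∧ R C B g ∧ g.comp f = h

/-- The one-element centred `S`-act `0`. -/
def oneCAct (S : Type u) [Monoid S] : CAct S :=
  ⟨oneAct S, PUnit.unit, fun _ => rfl, fun _ _ => rfl⟩

/-- The unique map `0 → X` of centred `S`-acts. -/
noncomputable def zeroTo (X : CAct S) : SMap (oneCAct S).1 X.1 :=
  ⟨fun _ => X.2.choose, fun _ s => (X.2.choose_spec.1 s).symm⟩

/-!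
A precover `p : P → B` lies in `R_𝒳`, hence so does `[h, p] : A ⊔ P → B` for any `h : A → B`,
while `A → A ⊔ P` is a unitary mono with complement `P ∈ 𝒳`: this gives the factorizations.
A unitary mono `f : X → Y` splits `Y ≅ X ⊔ (Y ∖ im f)`, so it lifts against every map for which
`Y ∖ im f` is projective. By the retract argument a map in `□R_𝒳` is a retract of some
`A → A ⊔ P`, and `U_𝒳` is closed under retracts because the complement of the retract is a
retract of a direct summand of the original complement. Conversely, factoring `Y → A` with
`Y ∈ 𝒳` as `Y → C → A` in `U_𝒳` followed by `R_𝒳` gives `C ≅ Y ⊔ (C ∖ im) ∈ 𝒳`, and `C → A`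
is then an `𝒳`-precover.
-/

open Set

namespace SMap

variable {A B C D : SAct S}

@[ext]
theorem ext {f g : SMap A B} (h : ∀ a, f.toFun a = g.toFun a) : f = g := by
  cases f; cases g; congr; exact funext h

theorem congr_toFun {f g : SMap A B} (h : f = g) (a : A.carrier) : f.toFun a = g.toFun a :=
  h ▸ rfl

theorem comp_assoc (h : SMap C D) (g : SMap B C) (f : SMap A B) :
    (h.comp g).comp f = h.comp (g.comp f) := rfl

def inl : SMap A (A.coprod B) := ⟨Sum.inl, fun _ _ => rfl⟩

def inr : SMap B (A.coprod B) := ⟨Sum.inr, fun _ _ => rfl⟩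

def copair (f : SMap A C) (g : SMap B C) : SMap (A.coprod B) C :=
  ⟨Sum.elim f.toFun g.toFun, by rintro (a | b) s; exacts [f.map_act a s, g.map_act b s]⟩

theorem comp_copair (h : SMap C D) (f : SMap A C) (g : SMap B C) :
    h.comp (copair f g) = copair (h.comp f) (h.comp g) := by
  ext (a | b) <;> rfl

theorem copair_bijective {f : SMap A C} {g : SMap B C} (hf : Function.Injective f.toFun)
    (hg : Function.Injective g.toFun) (hfg : IsCompl (range f.toFun) (range g.toFun)) :
    Function.Bijective (copair f g).toFun := by
  refine ⟨hf.sumElim hg fun a b => hfg.disjoint.ne_of_mem (mem_range_self a) (mem_range_self b),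
    fun c => ?_⟩
  have hc : c ∈ range f.toFun ⊔ range g.toFun := by
    rw [hfg.sup_eq_top]; exact mem_univ c
  rcases hc with ⟨a, rfl⟩ | ⟨b, rfl⟩
  exacts [⟨Sum.inl a, rfl⟩, ⟨Sum.inr b, rfl⟩]

theorem isIsoMap_of_bijective {f : SMap A B} (hf : Function.Bijective f.toFun) : IsIsoMap f := by
  let e := Equiv.ofBijective f.toFun hf
  refine ⟨⟨e.symm, fun b s => hf.1 ?_⟩, ?_, ?_⟩
  · rw [f.map_act]
    exact (e.apply_symm_apply _).trans (congrArg (B.act · s) (e.apply_symm_apply b).symm)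
  · ext a; exact e.symm_apply_apply a
  · ext b; exact e.apply_symm_apply b

end SMap

open SMap

theorem IsIsoMap.actRetract {A B : SAct S} {f : SMap A B} (hf : IsIsoMap f) : ActRetract B A :=
  let ⟨g, _, hfg⟩ := hf
  ⟨g, f, hfg⟩

def SAct.subIncl (Y : SAct S) (T : Set Y.carrier) (hT : ∀ t ∈ T, ∀ s : S, Y.act t s ∈ T) :
    SMap (Y.sub T hT) Y :=
  ⟨Subtype.val, fun _ _ => rfl⟩

theorem SAct.range_subIncl (Y : SAct S) (T : Set Y.carrier)
    (hT : ∀ t ∈ T, ∀ s : S, Y.act t s ∈ T) : range (Y.subIncl T hT).toFun = T :=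
  Subtype.range_coe

theorem isDirectSummand_sub (Z : SAct S) (T : Set Z.carrier)
    (hT : ∀ t ∈ T, ∀ s : S, Z.act t s ∈ T) (hTc : ∀ t ∈ Tᶜ, ∀ s : S, Z.act t s ∈ Tᶜ) :
    IsDirectSummand (Z.sub T hT) Z := by
  refine ⟨Z.sub Tᶜ hTc, copair (Z.subIncl T hT) (Z.subIncl Tᶜ hTc),
    copair_bijective Subtype.val_injective Subtype.val_injective ?_⟩
  rw [SAct.range_subIncl, SAct.range_subIncl]
  exact isCompl_compl

namespace ActClass

def RetractClosed (𝒳 : ActClass S) : Prop :=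
  ∀ A B : SAct S, ActRetract B A → 𝒳 A → 𝒳 B

def SummandClosed (𝒳 : ActClass S) : Prop :=
  ∀ A B : SAct S, IsDirectSummand B A → 𝒳 A → 𝒳 B

def CoprodClosed (𝒳 : ActClass S) : Prop :=
  ∀ (ι : Type u) (F : ι → SAct S), (∀ i, 𝒳 (F i)) → 𝒳 (SAct.sigmaCoprod F)

end ActClass

def emptyAct (S : Type u) [Monoid S] : SAct S :=
  ⟨PEmpty, fun a _ => a.elim, fun a => a.elim, fun a _ _ => a.elim⟩

def emptyTo (A : SAct S) : SMap (emptyAct S) A :=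
  ⟨fun a => a.elim, fun a _ => a.elim⟩

theorem mem_coprod {𝒳 : ActClass S} (hcop : 𝒳.CoprodClosed) (hret : 𝒳.RetractClosed)
    {A B : SAct S} (hA : 𝒳 A) (hB : 𝒳 B) : 𝒳 (A.coprod B) := by
  let F : ULift.{u} Bool → SAct S := fun b => cond b.down A B
  refine hret (SAct.sigmaCoprod F) _
    ⟨⟨Sum.elim (fun a => ⟨⟨true⟩, a⟩) (fun b => ⟨⟨false⟩, b⟩), by rintro (a | b) s <;> rfl⟩,
      ⟨fun | ⟨⟨true⟩, a⟩ => Sum.inl a | ⟨⟨false⟩, b⟩ => Sum.inr b,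
        by rintro ⟨⟨_ | _⟩, x⟩ s <;> rfl⟩,
      by ext (a | b) <;> rfl⟩ (hcop _ F ?_)
  rintro ⟨_ | _⟩
  exacts [hB, hA]

namespace IsUnitaryMono

variable {X Y : SAct S} {f : SMap X Y}

def compl (hf : IsUnitaryMono f) : SAct S :=
  Y.sub (range f.toFun)ᶜ fun t ht s hmem => ht (hf.2 t s hmem)

def complIncl (hf : IsUnitaryMono f) : SMap hf.compl Y :=
  Y.subIncl _ _

theorem isIsoMap_copair (hf : IsUnitaryMono f) : IsIsoMap (copair f hf.complIncl) :=
  isIsoMap_of_bijective <| copair_bijective hf.1 Subtype.val_injective <|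
    (SAct.range_subIncl Y _ _).symm ▸ isCompl_compl

theorem lifts (hf : IsUnitaryMono f) {A B : SAct S} {g : SMap A B} (hg : ProjWrt hf.compl g) :
    Lifts f g := by
  intro u v hsq
  obtain ⟨k, hk⟩ := hg (v.comp hf.complIncl)
  obtain ⟨e', he'e, hee'⟩ := hf.isIsoMap_copair
  refine ⟨(copair u k).comp e', ?_, ?_⟩
  · ext x
    exact congrArg (copair u k).toFun (congr_toFun he'e (Sum.inl x))
  · have hcopair : g.comp (copair u k) = v.comp (copair f hf.complIncl) := by
      rw [comp_copair, comp_copair, hsq, hk]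
    rw [← comp_assoc, hcopair, comp_assoc, hee']
    rfl

theorem of_retractOfMap {A B C : SAct S} {g : SMap A C} {f : SMap A B}
    (hgf : RetractOfMap g f) (hf : IsUnitaryMono f) : IsUnitaryMono g := by
  obtain ⟨α, β, hβα, hαg, hβf⟩ := hgf
  refine ⟨fun a b hab => hf.1 ?_, fun c s ⟨a, ha⟩ => ?_⟩
  · rw [← hαg]; exact congrArg α.toFun hab
  · obtain ⟨a', ha'⟩ := hf.2 (α.toFun c) s
      ⟨a, by rw [← hαg, ← α.map_act]; exact congrArg α.toFun ha⟩
    refine ⟨a', ?_⟩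
    rw [← hβf]
    exact (congrArg β.toFun ha').trans (congr_toFun hβα c)

end IsUnitaryMono

theorem uxClass_iff {𝒳 : ActClass S} {X Y : SAct S} {f : SMap X Y} :
    UXClass 𝒳 f ↔ ∃ hf : IsUnitaryMono f, 𝒳 hf.compl :=
  ⟨fun ⟨hinj, hu, hX⟩ => ⟨⟨hinj, hu⟩, hX⟩, fun ⟨hf, hX⟩ => ⟨hf.1, hf.2, hX⟩⟩

section

variable {𝒳 : ActClass S}

theorem UXClass.lifts {X Y A B : SAct S} {f : SMap X Y} {g : SMap A B} (hf : UXClass 𝒳 f)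
    (hg : RXClass 𝒳 g) : Lifts f g :=
  let ⟨hu, hX⟩ := uxClass_iff.1 hf
  hu.lifts (hg _ hX)

theorem isUnitaryMono_inl {A B : SAct S} : IsUnitaryMono (inl : SMap A (A.coprod B)) :=
  ⟨Sum.inl_injective, by
    rintro (a | b) s ⟨x, hx⟩
    exacts [⟨a, rfl⟩, absurd hx Sum.inl_ne_inr]⟩

theorem uxClass_inl (hret : 𝒳.RetractClosed) {A B : SAct S} (hB : 𝒳 B) :
    UXClass 𝒳 (inl : SMap A (A.coprod B)) := by
  have hu : IsUnitaryMono (inl : SMap A (A.coprod B)) := isUnitaryMono_inl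
  let e : SMap B hu.compl :=
    ⟨fun b => ⟨Sum.inr b, fun ⟨_, h⟩ => Sum.inl_ne_inr h⟩, fun _ _ => rfl⟩
  have he : Function.Bijective e.toFun := by
    refine ⟨fun b b' h => Sum.inr_injective (congrArg Subtype.val h), ?_⟩
    rintro ⟨a | b, hz⟩
    exacts [(hz ⟨a, rfl⟩).elim, ⟨b, rfl⟩]
  exact uxClass_iff.2 ⟨hu, hret B _ (isIsoMap_of_bijective he).actRetract hB⟩

theorem RXClass.of_comp {B C D : SAct S} {p : SMap C B} {q : SMap D C}
    (h : RXClass 𝒳 (p.comp q)) : RXClass 𝒳 p :=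
  fun P hP t =>
    let ⟨l, hl⟩ := h P hP t
    ⟨q.comp l, hl⟩

theorem exists_uxClass_rxClass_factor (hret : 𝒳.RetractClosed) {A B : SAct S}
    (hB : HasPrecover 𝒳 B) (h : SMap A B) :
    ∃ (C : SAct S) (f : SMap A C) (g : SMap C B),
      UXClass 𝒳 f ∧ RXClass 𝒳 g ∧ g.comp f = h := by
  obtain ⟨P, p, hP, hp⟩ := hB
  exact ⟨A.coprod P, inl, copair h p, uxClass_inl hret hP,
    RXClass.of_comp (q := inr) fun Q hQ t => hp t hQ, rfl⟩

theorem rxClass_of_rlp (hret : 𝒳.RetractClosed) {A B : SAct S} {g : SMap A B}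
    (hg : rlpC (UXClass 𝒳) g) : RXClass 𝒳 g := by
  intro P hP t
  obtain ⟨l, -, hl⟩ := hg (inl : SMap (emptyAct S) ((emptyAct S).coprod P))
    (uxClass_inl hret hP) (emptyTo A) (copair (emptyTo B) t) (by ext ⟨⟩)
  exact ⟨l.comp inr, congrArg (·.comp inr) hl⟩

theorem retractOfMap_of_lifts {A B C : SAct S} {i : SMap A C} {p : SMap C B} {h : SMap A B}
    (hpi : p.comp i = h) (hl : Lifts h p) : RetractOfMap h i :=
  let ⟨l, hli, hpl⟩ := hl i (SMap.id B) hpi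
  ⟨l, p, hpl, hli, hpi⟩

theorem UXClass.of_retractOfMap (hds : 𝒳.SummandClosed) (hret : 𝒳.RetractClosed)
    {A B C : SAct S} {g : SMap A C} {f : SMap A B} (hgf : RetractOfMap g f) (hf : UXClass 𝒳 f) :
    UXClass 𝒳 g := by
  obtain ⟨hfu, hX⟩ := uxClass_iff.1 hf
  have hgu := hfu.of_retractOfMap hgf
  refine uxClass_iff.2 ⟨hgu, ?_⟩
  obtain ⟨α, β, hβα, hαg, hβf⟩ := hgf
  -- `B ∖ im f` splits according to whether `β` lands in `im g`; the other part retracts onto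
  -- `C ∖ im g` via `α` and `β`.
  let T : Set hfu.compl.carrier := {z | β.toFun z.1 ∉ range g.toFun}
  have hT : ∀ z ∈ T, ∀ s, hfu.compl.act z s ∈ T := fun z hz s hmem =>
    hz (hgu.2 _ s (β.map_act z.1 s ▸ hmem))
  have hTc : ∀ z ∈ Tᶜ, ∀ s, hfu.compl.act z s ∈ Tᶜ := by
    rintro z hz s
    obtain ⟨a, ha⟩ := not_not.1 hz
    exact not_not.2 ⟨A.act a s, by rw [g.map_act, ha]; exact (β.map_act z.1 s).symm⟩
  have hαc : ∀ c : hgu.compl.carrier, α.toFun c.1 ∉ range f.toFun := by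
    rintro c ⟨a, ha⟩
    exact c.2 ⟨a, (congr_toFun hβf a).symm.trans
      ((congrArg β.toFun ha).trans (congr_toFun hβα c.1))⟩
  refine hret (hfu.compl.sub T hT) hgu.compl
    ⟨⟨fun c => ⟨⟨α.toFun c.1, hαc c⟩, ?_⟩, fun c s => ?_⟩,
    ⟨fun z => ⟨β.toFun z.1.1, z.2⟩, fun z s => Subtype.ext (β.map_act z.1.1 s)⟩,
    SMap.ext fun c => Subtype.ext (congr_toFun hβα c.1)⟩
    (hds _ _ (isDirectSummand_sub _ T hT hTc) hX)
  · show β.toFun (α.toFun c.1) ∉ range g.toFun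
    exact (congr_toFun hβα c.1).symm ▸ c.2
  · exact Subtype.ext (Subtype.ext (α.map_act c.1 s))

theorem uxClass_of_llp (hds : 𝒳.SummandClosed) (hret : 𝒳.RetractClosed) {X Y : SAct S}
    {f : SMap X Y} (hY : HasPrecover 𝒳 Y) (hf : llpC (RXClass 𝒳) f) : UXClass 𝒳 f := by
  obtain ⟨C, i, p, hi, hp, hpi⟩ := exists_uxClass_rxClass_factor hret hY f
  exact hi.of_retractOfMap hds hret (retractOfMap_of_lifts hpi (hf p hp))

theorem mem_of_uxClass (hcop : 𝒳.CoprodClosed) (hret : 𝒳.RetractClosed) {X Y : SAct S}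
    {f : SMap X Y} (hf : UXClass 𝒳 f) (hX : 𝒳 X) : 𝒳 Y :=
  let ⟨hu, hD⟩ := uxClass_iff.1 hf
  hret _ _ hu.isIsoMap_copair.actRetract (mem_coprod hcop hret hX hD)

end

theorem statement11 (𝒳 : ActClass S)
    (hcop : ∀ (ι : Type u) (F : ι → SAct S), (∀ i, 𝒳 (F i)) → 𝒳 (SAct.sigmaCoprod F))
    (hds : ∀ A B : SAct S, IsDirectSummand B A → 𝒳 A → 𝒳 B)
    (hret : ∀ A B : SAct S, ActRetract B A → 𝒳 A → 𝒳 B) :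
    (∀ A : SAct S, HasPrecover 𝒳 A) ↔
      (IsWFS (UXClass 𝒳) (RXClass 𝒳) ∧
        ∀ A : SAct S, ∃ Y : SAct S, 𝒳 Y ∧ Nonempty (SMap Y A)) := by
  constructor
  · intro hpre
    refine ⟨⟨fun g => ⟨fun hg _ _ f hf => hf.lifts hg, rxClass_of_rlp hret⟩,
      fun f => ⟨fun hf _ _ g hg => hf.lifts hg, uxClass_of_llp hds hret (hpre _)⟩,
      exists_uxClass_rxClass_factor hret (hpre _)⟩, fun A => ?_⟩
    obtain ⟨P, p, hP, -⟩ := hpre A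
    exact ⟨P, hP, ⟨p⟩⟩
  · rintro ⟨hwfs, hnonempty⟩ A
    obtain ⟨Y, hY, ⟨t⟩⟩ := hnonempty A
    obtain ⟨C, f, g, hf, hg, -⟩ := hwfs.factor t
    exact ⟨C, g, mem_of_uxClass hcop hret hf hY, fun P h hP => hg P hP h⟩
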